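/- arXiv:2411.03755 — 2 statements merged into one kernel-verified Lean document; each statement's English description precedes it below -/
import Mathlib

section
/- Under the multi-domain latent-variable model with block independence (Assumption 3.1) and domain variability (Assumption 3.2), let h_C : 𝒵 → ℝ^{m} be a measurable map whose pushforwards agree across domains, i.e., the law of h_C(z^(i)) equals the law of h_C(z^(j)) for all domains i, j. Then for every measurable set A_C contained in the range of h_C, the preimage h_C^{-1}(A_C) admits no partition into two disjoint measurable sets 𝒢 and ℱ such that 𝒢 = ℬ × 𝒮 for some set ℬ ⊆ 𝒞 (possibly empty), ℱ cannot be expressed as 𝒟 × 𝒮 for any set 𝒟 ⊆ 𝒞, and P_{z^(n)}[ℱ] > 0 for every domain n. (Indeed, for any such partition, equal pushforwards together with block independence force P_{z^(i)}[ℱ] = P_{z^(j)}[ℱ] for all i, j, contradicting domain variability.) -/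
open MeasureTheory Set

/-- measure-theoretic step of the proof of Theorem 3.1, Eq. (15).
Under block independence and domain variability, if the pushforwards of the per-domain latent
laws `P_{z^(n)} = μC ⊗ μS n` through a measurable map `h_C` agree across all domains, then for
every measurable `A_C` contained in the range of `h_C` the preimage of `A_C` admits no partition
into a product part `𝒢 = ℬ ×ˢ 𝒮` and a non-product part `ℱ` of strictly positive measure in
every domain. -/
theorem no_positive_measure_nonproduct_part
    (N dC dS m : ℕ) (hN : 2 ≤ N)
    -- supports of the latent variables
    (C : Set (Fin dC → ℝ)) (hCopen : IsOpen C)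
    (S : Set (Fin dS → ℝ)) (hSopen : IsOpen S)
    -- laws of the content and style variables (block independence: P_{z^(n)} = μC ⊗ μS n)
    (μC : Measure (Fin dC → ℝ)) [IsProbabilityMeasure μC]
    (μS : Fin N → Measure (Fin dS → ℝ)) [∀ n, IsProbabilityMeasure (μS n)]
    (hμC : μC Cᶜ = 0) (hμS : ∀ n, μS n Sᶜ = 0)
    -- Assumption 3.2 (domain variability)
    (hvar : ∀ A : Set ((Fin dC → ℝ) × (Fin dS → ℝ)), MeasurableSet A → A ⊆ C ×ˢ S →
      (∀ n, 0 < (μC.prod (μS n)) A) → (¬ ∃ B ⊆ C, A = B ×ˢ S) →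
      ∃ i j : Fin N, (μC.prod (μS i)) A ≠ (μC.prod (μS j)) A)
    -- the map `h_C` with matched pushforwards across domains
    (h : (Fin dC → ℝ) × (Fin dS → ℝ) → (Fin m → ℝ))
    (hmeas : Measurable h)
    (hmatch : ∀ i j : Fin N,
      Measure.map h (μC.prod (μS i)) = Measure.map h (μC.prod (μS j))) :
    ∀ A : Set (Fin m → ℝ), MeasurableSet A → A ⊆ h '' (C ×ˢ S) →
      ¬ ∃ G F : Set ((Fin dC → ℝ) × (Fin dS → ℝ)),
        MeasurableSet G ∧ MeasurableSet F ∧ Disjoint G F ∧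
        G ∪ F = (C ×ˢ S) ∩ h ⁻¹' A ∧
        (∃ B ⊆ C, G = B ×ˢ S) ∧
        (¬ ∃ D ⊆ C, F = D ×ˢ S) ∧
        (∀ n, 0 < (μC.prod (μS n)) F) := by
  intro A hA hAsub
  rintro ⟨G, F, hG, hF, hdisj, hunion, ⟨B, hB, rfl⟩, hnotprod, hpos⟩
  have hCm : MeasurableSet C := hCopen.measurableSet
  have hSm : MeasurableSet S := hSopen.measurableSet
  have hFsub : F ⊆ C ×ˢ S := by
    intro x hx
    have : x ∈ B ×ˢ S ∪ F := Or.inr hx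
    rw [hunion] at this
    exact this.1
  have hSone : ∀ n, μS n S = 1 := by
    intro n
    have h1 := measure_add_measure_compl (μ := μS n) hSm
    rw [hμS n, measure_univ, add_zero] at h1
    exact h1
  have hnull : ∀ n, (μC.prod (μS n)) ((C ×ˢ S)ᶜ) = 0 := by
    intro n
    have hsub : (C ×ˢ S)ᶜ ⊆ (Cᶜ ×ˢ univ) ∪ (univ ×ˢ Sᶜ) := by
      intro x hx
      by_cases hc : x.1 ∈ C
      · right; exact ⟨trivial, fun hs => hx ⟨hc, hs⟩⟩
      · left; exact ⟨hc, trivial⟩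
    refine le_antisymm ?_ zero_le
    calc (μC.prod (μS n)) ((C ×ˢ S)ᶜ)
        ≤ (μC.prod (μS n)) (Cᶜ ×ˢ univ) + (μC.prod (μS n)) (univ ×ˢ Sᶜ) :=
          le_trans (measure_mono hsub) (measure_union_le _ _)
      _ = 0 := by rw [Measure.prod_prod, Measure.prod_prod, hμC, hμS n]; simp
  have hGeq : ∀ n, (μC.prod (μS n)) (B ×ˢ S) = ∫⁻ c, B.indicator 1 c ∂μC := by
    intro n
    rw [Measure.prod_apply hG]
    congr 1
    ext c
    by_cases hc : c ∈ B
    · have hpre : Prod.mk c ⁻¹' (B ×ˢ S) = S := by ext y; simp [hc]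
      rw [hpre, hSone n, Set.indicator_of_mem hc]; rfl
    · have hpre : Prod.mk c ⁻¹' (B ×ˢ S) = ∅ := by ext y; simp [hc]
      rw [hpre, Set.indicator_of_notMem hc]; simp
  have hpre : ∀ n, (μC.prod (μS n)) ((C ×ˢ S) ∩ h ⁻¹' A) = (μC.prod (μS n)) (h ⁻¹' A) := by
    intro n
    rw [Set.inter_comm]
    exact measure_inter_conull (hnull n)
  have hmapeq : ∀ i j : Fin N,
      (μC.prod (μS i)) (h ⁻¹' A) = (μC.prod (μS j)) (h ⁻¹' A) := by
    intro i j
    rw [← Measure.map_apply hmeas hA, ← Measure.map_apply hmeas hA, hmatch i j]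
  have hFeq : ∀ i j : Fin N, (μC.prod (μS i)) F = (μC.prod (μS j)) F := by
    intro i j
    have hi : (μC.prod (μS i)) (B ×ˢ S) + (μC.prod (μS i)) F
        = (μC.prod (μS i)) (h ⁻¹' A) := by
      rw [← measure_union hdisj hF, hunion, hpre i]
    have hj : (μC.prod (μS j)) (B ×ˢ S) + (μC.prod (μS j)) F
        = (μC.prod (μS j)) (h ⁻¹' A) := by
      rw [← measure_union hdisj hF, hunion, hpre j]
    have hGij : (μC.prod (μS i)) (B ×ˢ S) = (μC.prod (μS j)) (B ×ˢ S) := by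
      rw [hGeq i, hGeq j]
    have hsum : (μC.prod (μS i)) (B ×ˢ S) + (μC.prod (μS i)) F
        = (μC.prod (μS i)) (B ×ˢ S) + (μC.prod (μS j)) F := by
      rw [hi, hmapeq i j, ← hj, hGij]
    exact (ENNReal.add_right_inj (measure_ne_top _ _)).mp hsum
  obtain ⟨i, j, hij⟩ := hvar F hF hFsub hpos hnotprod
  exact hij (hFeq i j)
end

section
/- Under the multi-domain latent-variable model with block independence (Assumption 3.1), suppose d̂_C ≥ d_C, d̂_S ≥ d_S, and the regular density condition holds. Define f̃ : 𝒳 → ℝ^{d̂_C + d̂_S} by zero-padding the true inverse: f̃_C(x) = ([g^{-1}(x)]_C, 0, …, 0) ∈ ℝ^{d̂_C} and f̃_S(x) = ([g^{-1}(x)]_S, 0, …, 0) ∈ ℝ^{d̂_S}, where [g^{-1}]_C and [g^{-1}]_S denote the content and style blocks of the inverse of g. Then f̃ is injective, f̃ satisfies constraints (a) and (b) of Problem (3), and E[‖f̃_S(x^(n))‖_0] = d_S for every domain n; consequently the optimal value of Problem (3) is at most N · d_S. -/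
open MeasureTheory Set
open scoped ENNReal
open scoped Classical

/-- `‖v‖₀`: the number of nonzero entries of a vector. -/
noncomputable def zeroNorm {k : ℕ} (v : Fin k → ℝ) : ℕ :=
  (Finset.univ.filter fun i => v i ≠ 0).card

/-- Zero-padding of a vector of ℝ^k into ℝ^m. -/
def padVec {k : ℕ} (m : ℕ) (v : Fin k → ℝ) : Fin m → ℝ :=
  fun i => if h : (i : ℕ) < k then v ⟨i, h⟩ else 0

lemma padVec_injective {k m : ℕ} (hk : k ≤ m) : Function.Injective (padVec m : (Fin k → ℝ) → Fin m → ℝ) := by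
  intro v w h
  funext i
  have := congrFun h ⟨i, lt_of_lt_of_le i.2 hk⟩
  simpa [padVec, i.2] using this

lemma measurable_padVec (k m : ℕ) : Measurable (padVec m : (Fin k → ℝ) → Fin m → ℝ) := by
  rw [measurable_pi_iff]
  intro i
  by_cases h : (i : ℕ) < k
  · simpa [padVec, h] using measurable_pi_apply _
  · simpa [padVec, h] using measurable_const

lemma card_filter_val_lt (k m : ℕ) (hk : k ≤ m) :
    (Finset.univ.filter fun i : Fin m => (i : ℕ) < k).card = k := by
  have : (Finset.univ.filter fun i : Fin m => (i : ℕ) < k) =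
      Finset.image (Fin.castLE hk) Finset.univ := by
    ext i
    simp only [Finset.mem_filter, Finset.mem_univ, true_and, Finset.mem_image]
    constructor
    · intro h; exact ⟨⟨i, h⟩, rfl⟩
    · rintro ⟨j, rfl⟩; exact j.2
  rw [this, Finset.card_image_of_injective _ (Fin.castLE_injective hk)]
  simp

lemma zeroNorm_padVec {k m : ℕ} (hk : k ≤ m) (v : Fin k → ℝ) (hv : ∀ i, v i ≠ 0) :
    zeroNorm (padVec m v) = k := by
  have : (Finset.univ.filter fun i : Fin m => padVec m v i ≠ 0) =
      (Finset.univ.filter fun i : Fin m => (i : ℕ) < k) := by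
    ext i
    simp only [Finset.mem_filter, Finset.mem_univ, true_and]
    by_cases h : (i : ℕ) < k
    · simp [padVec, h, hv]
    · simp [padVec, h]
  rw [zeroNorm, this, card_filter_val_lt k m hk]

lemma measurable_zeroNorm (k : ℕ) :
    Measurable fun v : Fin k → ℝ => (zeroNorm v : ℝ≥0∞) := by
  have h : ∀ v : Fin k → ℝ, (zeroNorm v : ℝ≥0∞) =
      ∑ i : Fin k, if v i ≠ 0 then 1 else 0 := by
    intro v
    rw [zeroNorm, Finset.card_filter, Nat.cast_sum]
    congr 1; funext i; split <;> simp
  simp only [h]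
  refine Finset.measurable_sum _ fun i _ => Measurable.ite ?_ measurable_const measurable_const
  exact (measurableSet_eq_fun (measurable_pi_apply i) measurable_const).compl

/-- feasible zero-padded inverse for Problem (3).
Under block independence, `d̂C ≥ dC`, `d̂S ≥ dS`, and the regular density condition, the
zero-padded true inverse `f̃ = (padVec d̂C ∘ [g⁻¹]_C, padVec d̂S ∘ [g⁻¹]_S)` is injective on 𝒳,
satisfies the constraints (a) and (b) of Problem (3), and has `E[‖f̃_S(x⁽ⁿ⁾)‖₀] = dS` for every
domain `n`; consequently the optimal value of Problem (3) is at most `N · dS`. -/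
theorem zero_padded_inverse_feasible
    (N d dC dS dCh dSh : ℕ) (hN : 2 ≤ N)
    (hdC : dC ≤ dCh) (hdS : dS ≤ dSh)
    -- supports of the latent variables
    (C : Set (Fin dC → ℝ)) (hCopen : IsOpen C)
    (S : Set (Fin dS → ℝ)) (hSopen : IsOpen S)
    -- laws of the content and style variables (block independence: P_{z^(n)} = μC ⊗ μS n)
    (μC : Measure (Fin dC → ℝ)) [IsProbabilityMeasure μC]
    (μS : Fin N → Measure (Fin dS → ℝ)) [∀ n, IsProbabilityMeasure (μS n)]
    (hμC : μC Cᶜ = 0) (hμS : ∀ n, μS n Sᶜ = 0)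
    -- regular density condition: each P_{z^(n)} has a density, finite and positive on 𝒵
    (hdens : ∀ n : Fin N, ∃ p : (Fin dC → ℝ) × (Fin dS → ℝ) → ℝ≥0∞, Measurable p ∧
      μC.prod (μS n) = volume.withDensity p ∧ ∀ z ∈ C ×ˢ S, 0 < p z ∧ p z < ⊤)
    -- the generator `g`, a differentiable bijection from 𝒞 × 𝒮 onto 𝒳 = g(𝒞 × 𝒮),
    -- with (measurable) inverse `gInv` on 𝒳
    (g : (Fin dC → ℝ) × (Fin dS → ℝ) → (Fin d → ℝ))
    (hg_meas : Measurable g)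
    (hg_diff : DifferentiableOn ℝ g (C ×ˢ S))
    (hg_inj : InjOn g (C ×ˢ S))
    (gInv : (Fin d → ℝ) → (Fin dC → ℝ) × (Fin dS → ℝ))
    (hgInv_meas : Measurable gInv)
    (hgInv : ∀ p ∈ C ×ˢ S, gInv (g p) = p) :
    -- `f̃` is injective on 𝒳
    InjOn (fun x => (padVec dCh (gInv x).1, padVec dSh (gInv x).2)) (g '' (C ×ˢ S)) ∧
    -- constraint (a): the laws of the contents extracted by `f̃` match across all domains
    (∀ i j : Fin N,
      Measure.map (fun x => padVec dCh (gInv x).1) (Measure.map g (μC.prod (μS i))) =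
        Measure.map (fun x => padVec dCh (gInv x).1) (Measure.map g (μC.prod (μS j)))) ∧
    -- constraint (b): contents and styles extracted by `f̃` are independent in each domain
    (∀ n : Fin N,
      Measure.map (fun x => (padVec dCh (gInv x).1, padVec dSh (gInv x).2))
          (Measure.map g (μC.prod (μS n))) =
        (Measure.map (fun x => padVec dCh (gInv x).1) (Measure.map g (μC.prod (μS n)))).prod
          (Measure.map (fun x => padVec dSh (gInv x).2) (Measure.map g (μC.prod (μS n))))) ∧
    -- the sparsity objective of `f̃` equals `dS` in every domain
    (∀ n : Fin N,
      ∫⁻ x, (zeroNorm (padVec dSh (gInv x).2) : ℝ≥0∞) ∂(Measure.map g (μC.prod (μS n))) =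
        (dS : ℝ≥0∞)) ∧
    -- consequently, the optimal value of Problem (3) is at most `N · dS`
    sInf {v : ℝ≥0∞ | ∃ (fC : (Fin d → ℝ) → (Fin dCh → ℝ)) (fS : (Fin d → ℝ) → (Fin dSh → ℝ)),
        Measurable fC ∧ Measurable fS ∧
        InjOn (fun x => (fC x, fS x)) (g '' (C ×ˢ S)) ∧
        (∀ i j : Fin N,
          Measure.map fC (Measure.map g (μC.prod (μS i))) =
            Measure.map fC (Measure.map g (μC.prod (μS j)))) ∧
        (∀ n : Fin N,
          Measure.map (fun x => (fC x, fS x)) (Measure.map g (μC.prod (μS n))) =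
            (Measure.map fC (Measure.map g (μC.prod (μS n)))).prod
              (Measure.map fS (Measure.map g (μC.prod (μS n))))) ∧
        v = ∑ n : Fin N, ∫⁻ x, (zeroNorm (fS x) : ℝ≥0∞) ∂(Measure.map g (μC.prod (μS n)))} ≤
      (N : ℝ≥0∞) * (dS : ℝ≥0∞) := by
  classical
  have hCm : MeasurableSet C := hCopen.measurableSet
  have hSm : MeasurableSet S := hSopen.measurableSet
  set fC : (Fin d → ℝ) → (Fin dCh → ℝ) := fun x => padVec dCh (gInv x).1 with hfC
  set fS : (Fin d → ℝ) → (Fin dSh → ℝ) := fun x => padVec dSh (gInv x).2 with hfS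
  have hfCm : Measurable fC := (measurable_padVec _ _).comp (measurable_fst.comp hgInv_meas)
  have hfSm : Measurable fS := (measurable_padVec _ _).comp (measurable_snd.comp hgInv_meas)
  have hfull : ∀ n : Fin N, (μC.prod (μS n)) ((C ×ˢ S)ᶜ) = 0 := by
    intro n
    refine le_antisymm ?_ zero_le
    rw [Set.compl_prod_eq_union]
    calc (μC.prod (μS n)) (Cᶜ ×ˢ univ ∪ univ ×ˢ Sᶜ)
        ≤ (μC.prod (μS n)) (Cᶜ ×ˢ univ) + (μC.prod (μS n)) (univ ×ˢ Sᶜ) :=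
          measure_union_le _ _
      _ = 0 := by rw [Measure.prod_prod, Measure.prod_prod, hμC, hμS n]; simp
  have hae : ∀ n : Fin N, ∀ᵐ z ∂(μC.prod (μS n)), z ∈ C ×ˢ S := by
    intro n
    rw [ae_iff]
    exact hfull n
  -- a.e. all style coordinates are nonzero
  have haeS : ∀ n : Fin N, ∀ᵐ z ∂(μC.prod (μS n)), ∀ i : Fin dS, z.2 i ≠ 0 := by
    intro n
    rw [ae_all_iff]
    intro i
    obtain ⟨p, hpmeas, hp, -⟩ := hdens n
    have hB : MeasurableSet {s : Fin dS → ℝ | s i = 0} :=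
      measurableSet_eq_fun (measurable_pi_apply i) measurable_const
    have hvol : (volume : Measure (Fin dS → ℝ)) {s | s i = 0} = 0 := by
      have hset : {s : Fin dS → ℝ | s i = 0} =
          Set.pi Set.univ (fun j => if j = i then ({0} : Set ℝ) else Set.univ) := by
        ext s
        simp only [Set.mem_setOf_eq, Set.mem_pi, Set.mem_univ, true_implies]
        constructor
        · intro h j
          by_cases hj : j = i
          · subst hj; simp [h]
          · simp [hj]
        · intro h
          have := h i
          simpa using this
      rw [hset, volume_pi, Measure.pi_pi]
      refine Finset.prod_eq_zero (Finset.mem_univ i) ?_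
      simp
    have hprodvol : (volume : Measure ((Fin dC → ℝ) × (Fin dS → ℝ)))
        (Set.univ ×ˢ {s | s i = 0}) = 0 := by
      rw [Measure.volume_eq_prod, Measure.prod_prod, hvol, mul_zero]
    have hμSB : μS n {s | s i = 0} = 0 := by
      have h1 : μS n {s | s i = 0} = (μC.prod (μS n)) (Set.univ ×ˢ {s | s i = 0}) := by
        rw [Measure.prod_prod, measure_univ, one_mul]
      rw [h1, hp, withDensity_apply _ (MeasurableSet.univ.prod hB)]
      exact setLIntegral_measure_zero _ _ hprodvol
    have h2 : (μC.prod (μS n)) {z : (Fin dC → ℝ) × (Fin dS → ℝ) | z.2 i = 0} = 0 := by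
      have : {z : (Fin dC → ℝ) × (Fin dS → ℝ) | z.2 i = 0} =
          Set.univ ×ˢ {s | s i = 0} := by ext z; simp
      rw [this, Measure.prod_prod, measure_univ, one_mul, hμSB]
    rw [ae_iff]
    simpa using h2
  -- content marginal
  have keyC : ∀ n : Fin N,
      Measure.map fC (Measure.map g (μC.prod (μS n))) = Measure.map (padVec dCh) μC := by
    intro n
    rw [Measure.map_map hfCm hg_meas]
    have he : (fC ∘ g) =ᵐ[μC.prod (μS n)] fun z => padVec dCh z.1 :=
      (hae n).mono fun z hz => by simp [hfC, Function.comp, hgInv z hz]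
    rw [Measure.map_congr he,
      show (fun z : (Fin dC → ℝ) × (Fin dS → ℝ) => padVec dCh z.1) =
        (padVec dCh) ∘ Prod.fst from rfl,
      ← Measure.map_map (measurable_padVec _ _) measurable_fst, Measure.map_fst_prod,
      measure_univ, one_smul]
  have keyS : ∀ n : Fin N,
      Measure.map fS (Measure.map g (μC.prod (μS n))) = Measure.map (padVec dSh) (μS n) := by
    intro n
    rw [Measure.map_map hfSm hg_meas]
    have he : (fS ∘ g) =ᵐ[μC.prod (μS n)] fun z => padVec dSh z.2 :=
      (hae n).mono fun z hz => by simp [hfS, Function.comp, hgInv z hz]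
    rw [Measure.map_congr he,
      show (fun z : (Fin dC → ℝ) × (Fin dS → ℝ) => padVec dSh z.2) =
        (padVec dSh) ∘ Prod.snd from rfl,
      ← Measure.map_map (measurable_padVec _ _) measurable_snd, Measure.map_snd_prod,
      measure_univ, one_smul]
  refine ⟨?_, ?_, ?_, ?_, ?_⟩
  · -- injectivity
    rintro x ⟨p, hp, rfl⟩ y ⟨q, hq, rfl⟩ h
    simp only [hgInv p hp, hgInv q hq, Prod.mk.injEq] at h
    have h1 : p.1 = q.1 := padVec_injective hdC h.1
    have h2 : p.2 = q.2 := padVec_injective hdS h.2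
    exact congrArg g (Prod.ext h1 h2)
  · exact fun i j => (keyC i).trans (keyC j).symm
  · -- independence
    intro n
    rw [keyC n, keyS n, Measure.map_map (hfCm.prodMk hfSm) hg_meas]
    have he : ((fun x => (fC x, fS x)) ∘ g) =ᵐ[μC.prod (μS n)]
        Prod.map (padVec dCh) (padVec dSh) :=
      (hae n).mono fun z hz => by
        simp [hfC, hfS, Function.comp, hgInv z hz, Prod.map]
    rw [Measure.map_congr he,
      ← Measure.map_prod_map _ _ (measurable_padVec _ _) (measurable_padVec _ _)]
  · -- objective value
    intro n
    rw [show (∫⁻ x, (zeroNorm (padVec dSh (gInv x).2) : ℝ≥0∞)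
          ∂(Measure.map g (μC.prod (μS n)))) =
        ∫⁻ z, (zeroNorm (padVec dSh (gInv (g z)).2) : ℝ≥0∞) ∂(μC.prod (μS n)) from
      lintegral_map ((measurable_zeroNorm _).comp hfSm) hg_meas]
    have he : (fun z => ((zeroNorm (padVec dSh (gInv (g z)).2) : ℝ≥0∞))) =ᵐ[μC.prod (μS n)]
        fun _ => (dS : ℝ≥0∞) :=
      ((hae n).and (haeS n)).mono fun z hz => by
        simp only [hgInv z hz.1, zeroNorm_padVec hdS z.2 hz.2]
    rw [lintegral_congr_ae he, lintegral_const, measure_univ, mul_one]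
  · -- optimal value bound
    have hobj : ∀ n : Fin N,
        ∫⁻ x, (zeroNorm (fS x) : ℝ≥0∞) ∂(Measure.map g (μC.prod (μS n))) = (dS : ℝ≥0∞) := by
      intro n
      rw [show (∫⁻ x, (zeroNorm (fS x) : ℝ≥0∞) ∂(Measure.map g (μC.prod (μS n)))) =
          ∫⁻ z, (zeroNorm (fS (g z)) : ℝ≥0∞) ∂(μC.prod (μS n)) from
        lintegral_map ((measurable_zeroNorm _).comp hfSm) hg_meas]
      have he : (fun z => ((zeroNorm (fS (g z)) : ℝ≥0∞))) =ᵐ[μC.prod (μS n)]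
          fun _ => (dS : ℝ≥0∞) :=
        ((hae n).and (haeS n)).mono fun z hz => by
          simp only [hfS, hgInv z hz.1, zeroNorm_padVec hdS z.2 hz.2]
      rw [lintegral_congr_ae he, lintegral_const, measure_univ, mul_one]
    have hmem : (N : ℝ≥0∞) * (dS : ℝ≥0∞) ∈ {v : ℝ≥0∞ | ∃ (fC : (Fin d → ℝ) → (Fin dCh → ℝ))
        (fS : (Fin d → ℝ) → (Fin dSh → ℝ)),
        Measurable fC ∧ Measurable fS ∧
        InjOn (fun x => (fC x, fS x)) (g '' (C ×ˢ S)) ∧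
        (∀ i j : Fin N,
          Measure.map fC (Measure.map g (μC.prod (μS i))) =
            Measure.map fC (Measure.map g (μC.prod (μS j)))) ∧
        (∀ n : Fin N,
          Measure.map (fun x => (fC x, fS x)) (Measure.map g (μC.prod (μS n))) =
            (Measure.map fC (Measure.map g (μC.prod (μS n)))).prod
              (Measure.map fS (Measure.map g (μC.prod (μS n))))) ∧
        v = ∑ n : Fin N, ∫⁻ x, (zeroNorm (fS x) : ℝ≥0∞) ∂(Measure.map g (μC.prod (μS n)))} := by
      refine ⟨fC, fS, hfCm, hfSm, ?_, fun i j => (keyC i).trans (keyC j).symm, ?_, ?_⟩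
      · rintro x ⟨p, hp, rfl⟩ y ⟨q, hq, rfl⟩ h
        simp only [hgInv p hp, hgInv q hq, Prod.mk.injEq, hfC, hfS] at h
        exact congrArg g (Prod.ext (padVec_injective hdC h.1) (padVec_injective hdS h.2))
      · intro n
        rw [keyC n, keyS n, Measure.map_map (hfCm.prodMk hfSm) hg_meas]
        have he : ((fun x => (fC x, fS x)) ∘ g) =ᵐ[μC.prod (μS n)]
            Prod.map (padVec dCh) (padVec dSh) :=
          (hae n).mono fun z hz => by
            simp [hfC, hfS, Function.comp, hgInv z hz, Prod.map]
        rw [Measure.map_congr he,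
          ← Measure.map_prod_map _ _ (measurable_padVec _ _) (measurable_padVec _ _)]
      · rw [Finset.sum_congr rfl fun n _ => hobj n, Finset.sum_const]
        simp [mul_comm]
    exact sInf_le hmem
end
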